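/- arXiv:1904.12000 — 2 statements merged into one kernel-verified Lean document; each statement's English description precedes it below -/
import Mathlib

section
/- Let H = (X, Y, E) be a bipartite graph such that for any two distinct vertices x₁, x₂ ∈ X, the neighborhoods N(x₁) and N(x₂) are distinct. Then |X| ≤ ν(H) + 2^{ν(H)}, where ν(H) is the matching number (size of a maximum matching) of H. -/
/-- In a bipartite graph `H = (X, Y, E)` in which distinct vertices of `X`
have distinct neighborhoods, `|X| ≤ ν(H) + 2 ^ ν(H)` where `ν` is the matching number. -/
theorem bipartite_card_le_matchingNumber_add_two_pow
    {X Y : Type*} [Fintype X] [Fintype Y] (E : X → Y → Prop)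
    (hdist : ∀ x₁ x₂ : X, x₁ ≠ x₂ → {y | E x₁ y} ≠ {y | E x₂ y})
    (ν : ℕ)
    (hν : IsGreatest {n | ∃ M : Finset (X × Y),
      (∀ p ∈ M, E p.1 p.2) ∧
      (∀ p ∈ M, ∀ q ∈ M, p ≠ q → p.1 ≠ q.1 ∧ p.2 ≠ q.2) ∧ M.card = n} ν) :
    Fintype.card X ≤ ν + 2 ^ ν := by
  classical
  obtain ⟨⟨M, hE, hM, hcard⟩, hmax⟩ := hν
  set X₁ : Finset X := M.image Prod.fst with hX₁
  set Y₁ : Finset Y := M.image Prod.snd with hY₁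
  have hX₁card : X₁.card = ν := by
    rw [hX₁, Finset.card_image_of_injOn, hcard]
    intro p hp q hq hpq
    by_contra h
    exact (hM p hp q hq h).1 hpq
  have hY₁card : Y₁.card = ν := by
    rw [hY₁, Finset.card_image_of_injOn, hcard]
    intro p hp q hq hpq
    by_contra h
    exact (hM p hp q hq h).2 hpq
  -- every unmatched x has all its neighbors matched
  have hsub : ∀ x : X, x ∉ X₁ → ∀ y : Y, E x y → y ∈ Y₁ := by
    intro x hx y hy
    by_contra hyY
    have hxy : (x, y) ∉ M := fun h => hx (Finset.mem_image_of_mem Prod.fst h)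
    have hmem : ν + 1 ∈ {n | ∃ M : Finset (X × Y),
        (∀ p ∈ M, E p.1 p.2) ∧
        (∀ p ∈ M, ∀ q ∈ M, p ≠ q → p.1 ≠ q.1 ∧ p.2 ≠ q.2) ∧ M.card = n} := by
      refine ⟨insert (x, y) M, ?_, ?_, ?_⟩
      · intro p hp
        rcases Finset.mem_insert.mp hp with h | h
        · subst h; exact hy
        · exact hE p h
      · intro p hp q hq hpq
        rcases Finset.mem_insert.mp hp with h | h <;>
          rcases Finset.mem_insert.mp hq with h' | h'
        · exact absurd (h.trans h'.symm) hpq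
        · subst h
          refine ⟨fun he => hx ?_, fun he => hyY ?_⟩
          · rw [show x = q.1 from he]; exact Finset.mem_image_of_mem Prod.fst h'
          · rw [show y = q.2 from he]; exact Finset.mem_image_of_mem Prod.snd h'
        · subst h'
          refine ⟨fun he => hx ?_, fun he => hyY ?_⟩
          · rw [show x = p.1 from he.symm]; exact Finset.mem_image_of_mem Prod.fst h
          · rw [show y = p.2 from he.symm]; exact Finset.mem_image_of_mem Prod.snd h
        · exact hM p h q h' hpq
      · rw [Finset.card_insert_of_notMem hxy, hcard]
    have := hmax hmem
    omega
  have hcompl : X₁ᶜ.card ≤ 2 ^ ν := by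
    have hinj : Set.InjOn (fun x => Y₁.filter (fun y => E x y)) (X₁ᶜ : Finset X) := by
      intro x₁ h₁ x₂ h₂ hf
      by_contra hne
      apply hdist x₁ x₂ hne
      have h₁' := Finset.mem_compl.mp (Finset.mem_coe.mp h₁)
      have h₂' := Finset.mem_compl.mp (Finset.mem_coe.mp h₂)
      have hf' : Y₁.filter (fun y => E x₁ y) = Y₁.filter (fun y => E x₂ y) := hf
      ext y
      simp only [Set.mem_setOf_eq]
      constructor
      · intro h
        have : y ∈ Y₁.filter (fun y => E x₁ y) :=
          Finset.mem_filter.mpr ⟨hsub x₁ h₁' y h, h⟩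
        rw [hf'] at this
        exact (Finset.mem_filter.mp this).2
      · intro h
        have : y ∈ Y₁.filter (fun y => E x₂ y) :=
          Finset.mem_filter.mpr ⟨hsub x₂ h₂' y h, h⟩
        rw [← hf'] at this
        exact (Finset.mem_filter.mp this).2
    have hmaps : ∀ x ∈ X₁ᶜ, Y₁.filter (fun y => E x y) ∈ Y₁.powerset := by
      intro x _
      exact Finset.mem_powerset.mpr (Finset.filter_subset _ _)
    have := Finset.card_le_card_of_injOn _ hmaps hinj
    rwa [Finset.card_powerset, hY₁card] at this
  have := Finset.card_add_card_compl X₁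
  omega
end

section
/- Let G be a finite directed graph. If G contains two distinct non-trivial strongly connected components C₁ and C₂ with edges (v₁, u₁) inside C₁ and (v₂, u₂) inside C₂, then the graph obtained by replacing edges (v₁, u₁) and (v₂, u₂) with (v₁, u₂) and (v₂, u₁) has reachability count f at least as large as that of G. -/
/-!
Every edge of `G` is still "simulated" in the modified graph: the deleted edge `v₁ → u₁` is replaced
by the route `v₁ → u₂ ⇝ v₂ → u₁`, and symmetrically for `v₂ → u₁`. The routes `u₁ ⇝ v₁` and
`u₂ ⇝ v₂` survive the deletion because a path inside the component of `v₁` never needs to leave `v₁`,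
and never visits `v₂`, which lies in another component. Hence reachability only grows.
-/

/-- The number of ordered pairs `(v, u)` such that `u` is reachable from `v`. -/
noncomputable def reachCount {V : Type*} (E : V → V → Prop) : ℕ :=
  Nat.card {p : V × V // Relation.ReflTransGen E p.1 p.2}

open Relation

theorem reachCount_mono {V : Type*} [Finite V] {E F : V → V → Prop}
    (h : ∀ a b, ReflTransGen E a b → ReflTransGen F a b) : reachCount E ≤ reachCount F :=
  Nat.card_mono (Set.toFinite _) fun p hp => h p.1 p.2 hp

theorem Relation.ReflTransGen.restrict_between {V : Type*} {E : V → V → Prop} {a b : V}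
    (h : ReflTransGen E a b) :
    ReflTransGen (fun x y => E x y ∧ ReflTransGen E a x ∧ ReflTransGen E y b ∧ x ≠ b) a b := by
  induction h using ReflTransGen.head_induction_on with
  | refl => exact .refl
  | @head a c hac hcb ih =>
    by_cases hab : a = b
    · rw [hab]
    refine .head ⟨hac, .refl, hcb, hab⟩ (ReflTransGen.mono (fun x y ⟨hxy, hcx, hyb, hxb⟩ =>
      ⟨hxy, hcx.head hac, hyb, hxb⟩) _ _ ih)

theorem reflTransGen_avoiding_of_not_mutual {V : Type*} {E : V → V → Prop} {v u v' : V}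
    (hvu : E v u) (huv : ReflTransGen E u v) (hv' : ¬ (ReflTransGen E v v' ∧ ReflTransGen E v' v)) :
    ReflTransGen (fun x y => E x y ∧ x ≠ v ∧ x ≠ v') u v := by
  refine ReflTransGen.mono (fun x y ⟨hxy, hux, hyv, hxv⟩ => ⟨hxy, hxv, ?_⟩) _ _ huv.restrict_between
  rintro rfl
  exact hv' ⟨hux.head hvu, hyv.head hxy⟩

theorem swap_edges_between_sccs_reachCount_general
    {V : Type*} [Fintype V] (E : V → V → Prop) (v₁ u₁ v₂ u₂ : V)
    (h₁ : E v₁ u₁) (h₂ : E v₂ u₂)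
    (hscc₁ : Relation.ReflTransGen E u₁ v₁)
    (hscc₂ : Relation.ReflTransGen E u₂ v₂)
    (hdistinct : ¬ (Relation.ReflTransGen E v₁ v₂ ∧ Relation.ReflTransGen E v₂ v₁)) :
    reachCount E ≤ reachCount (fun x y =>
      (E x y ∧ (x, y) ≠ (v₁, u₁) ∧ (x, y) ≠ (v₂, u₂)) ∨
      (x, y) = (v₁, u₂) ∨ (x, y) = (v₂, u₁)) := by
  set E' : V → V → Prop := fun x y =>
    (E x y ∧ (x, y) ≠ (v₁, u₁) ∧ (x, y) ≠ (v₂, u₂)) ∨ (x, y) = (v₁, u₂) ∨ (x, y) = (v₂, u₁)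
  have kept : ∀ {x y}, E x y → x ≠ v₁ ∧ x ≠ v₂ → E' x y := fun hxy ⟨hx₁, hx₂⟩ =>
    .inl ⟨hxy, by simp [hx₁], by simp [hx₂]⟩
  have path₁ : ReflTransGen E' u₁ v₁ := ReflTransGen.mono (fun _ _ ⟨hxy, hx⟩ => kept hxy hx) _ _
    (reflTransGen_avoiding_of_not_mutual h₁ hscc₁ hdistinct)
  have path₂ : ReflTransGen E' u₂ v₂ :=
    ReflTransGen.mono (fun _ _ ⟨hxy, hx₂, hx₁⟩ => kept hxy ⟨hx₁, hx₂⟩) _ _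
      (reflTransGen_avoiding_of_not_mutual h₂ hscc₂ (hdistinct ∘ And.symm))
  have new₁₂ : E' v₁ u₂ := .inr (.inl rfl)
  have new₂₁ : E' v₂ u₁ := .inr (.inr rfl)
  refine reachCount_mono (reflTransGen_closed fun x y hxy => ?_)
  by_cases hx₁ : (x, y) = (v₁, u₁)
  · obtain ⟨rfl, rfl⟩ := Prod.mk.inj hx₁
    exact .head new₁₂ (path₂.tail new₂₁)
  by_cases hx₂ : (x, y) = (v₂, u₂)
  · obtain ⟨rfl, rfl⟩ := Prod.mk.inj hx₂
    exact .head new₂₁ (path₁.tail new₁₂)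
  exact .single (.inl ⟨hxy, hx₁, hx₂⟩)

/-- If a finite directed graph contains two distinct non-trivial strongly
connected components `C₁, C₂` with edges `(v₁,u₁)` in `C₁` and `(v₂,u₂)` in `C₂`, then
swapping these edges for `(v₁,u₂)` and `(v₂,u₁)` does not decrease the reachability count. -/
theorem swap_edges_between_sccs_reachCount
    {V : Type*} [Fintype V] (E : V → V → Prop) (v₁ u₁ v₂ u₂ : V)
    (h₁ : E v₁ u₁) (h₂ : E v₂ u₂)
    (hnt₁ : v₁ ≠ u₁) (hnt₂ : v₂ ≠ u₂)
    (hscc₁ : Relation.ReflTransGen E u₁ v₁)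
    (hscc₂ : Relation.ReflTransGen E u₂ v₂)
    (hdistinct : ¬ (Relation.ReflTransGen E v₁ v₂ ∧ Relation.ReflTransGen E v₂ v₁)) :
    reachCount E ≤ reachCount (fun x y =>
      (E x y ∧ (x, y) ≠ (v₁, u₁) ∧ (x, y) ≠ (v₂, u₂)) ∨
      (x, y) = (v₁, u₂) ∨ (x, y) = (v₂, u₁)) :=
  swap_edges_between_sccs_reachCount_general E v₁ u₁ v₂ u₂ h₁ h₂ hscc₁ hscc₂ hdistinct
end
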